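/- arXiv:2107.03481 — 5 statements merged into one kernel-verified Lean document; each statement's English description precedes it below -/
import Mathlib

section
/- Let h > 0 and let ψ_k, ψ_{k-1} be adjacent P1 hat functions on a grid of step h. Then for p ∈ [0,h): ∫ ψ_k(x)·ψ_{k-1}(x-p) dx = (1/h²)·( (1/6)(h-p)³ − (1/3)p³ + h²p ). -/
open MeasureTheory

/-- The P1 hat function on an equidistant grid of step size `h`, centered at `k*h`. -/
noncomputable def hatFun (h : ℝ) (k : ℤ) (x : ℝ) : ℝ :=
  if x ∈ Set.Ioc ((k - 1) * h) (k * h) then (x - (k - 1) * h) / h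
  else if x ∈ Set.Ioo (k * h) ((k + 1) * h) then ((k + 1) * h - x) / h
  else 0

/-- The a.e. derivative of the P1 hat function `hatFun h k`. -/
noncomputable def hatFun' (h : ℝ) (k : ℤ) (x : ℝ) : ℝ :=
  if x ∈ Set.Ioo ((k - 1) * h) (k * h) then 1 / h
  else if x ∈ Set.Ioo (k * h) ((k + 1) * h) then -(1 / h)
  else 0

lemma poly_int' (s t u v : ℝ) :
    ∫ x in s..t, (x - u) * (x - v) =
      (t^3/3 - (u+v)*t^2/2 + u*v*t) - (s^3/3 - (u+v)*s^2/2 + u*v*s) := by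
  rw [intervalIntegral.integral_eq_sub_of_hasDerivAt (f := fun x => x^3/3 - (u+v)*x^2/2 + u*v*x)]
  · intro x _
    have h1 := ((hasDerivAt_pow 3 x).div_const 3).sub (((hasDerivAt_pow 2 x).const_mul (u+v)).div_const 2)
    have h2 := h1.add ((hasDerivAt_id x).const_mul (u*v))
    convert h2 using 1
    · funext y; simp only [Pi.add_apply, Pi.sub_apply, id]
    push_cast; ring
  · exact (by continuity : Continuous fun x : ℝ => (x - u)*(x - v)).intervalIntegrable _ _

/-- A real-centered version of the hat function. -/
noncomputable def hatR (h : ℝ) (q : ℝ) (x : ℝ) : ℝ :=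
  if x ∈ Set.Ioc ((q - 1) * h) (q * h) then (x - (q - 1) * h) / h
  else if x ∈ Set.Ioo (q * h) ((q + 1) * h) then ((q + 1) * h - x) / h
  else 0

lemma key_pt (h q p x : ℝ) (hh : 0 < h) (hp0 : 0 ≤ p) (hph : p < h) :
    hatR h q x * hatR h (q - 1) (x - p) =
      (Set.Ioc ((q-1)*h) ((q-1)*h + p)).indicator
        (fun x => (1/h^2) * ((x - (q-1)*h) * (x - (p + (q-2)*h)))) x
      + (Set.Ioc ((q-1)*h + p) (q*h)).indicator
        (fun x => -(1/h^2) * ((x - (q-1)*h) * (x - (q*h + p)))) x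
      + (Set.Ioc (q*h) (q*h + p)).indicator
        (fun x => (1/h^2) * ((x - (q+1)*h) * (x - (q*h + p)))) x := by
  rcases le_or_gt x ((q-1)*h) with h1 | h1
  · have H1 : hatR h q x = 0 := by
      simp only [hatR]
      rw [if_neg (by simp only [Set.mem_Ioc]; push_neg; intro hx; linarith),
        if_neg (by simp only [Set.mem_Ioo]; push_neg; intro hx; linarith)]
    rw [H1, zero_mul,
      Set.indicator_of_notMem (by simp only [Set.mem_Ioc]; push_neg; intro hx; linarith),
      Set.indicator_of_notMem (by simp only [Set.mem_Ioc]; push_neg; intro hx; linarith),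
      Set.indicator_of_notMem (by simp only [Set.mem_Ioc]; push_neg; intro hx; linarith)]
    ring
  · rcases le_or_gt x ((q-1)*h + p) with h2 | h2
    · have H1 : hatR h q x = (x - (q-1)*h) / h := by
        simp only [hatR]
        rw [if_pos (Set.mem_Ioc.2 ⟨h1, by linarith⟩)]
      have H2 : hatR h (q-1) (x - p) = (x - p - (q-2)*h) / h := by
        simp only [hatR]
        rw [if_pos (Set.mem_Ioc.2 ⟨by linarith, by linarith⟩)]
        ring_nf
      rw [H1, H2,
        Set.indicator_of_mem (Set.mem_Ioc.2 ⟨h1, h2⟩),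
        Set.indicator_of_notMem (by simp only [Set.mem_Ioc]; push_neg; intro hx; linarith),
        Set.indicator_of_notMem (by simp only [Set.mem_Ioc]; push_neg; intro hx; linarith)]
      field_simp
      ring
    · have H2 : x ≤ q*h + p → hatR h (q-1) (x - p) = (q*h + p - x) / h := by
        intro h4
        simp only [hatR]
        rcases lt_or_ge x (q*h + p) with h5 | h5
        · rw [if_neg (by simp only [Set.mem_Ioc]; push_neg; intro hx; linarith),
            if_pos (Set.mem_Ioo.2 ⟨by linarith, by linarith⟩)]
          ring_nf
        · have hx5 : x = q*h + p := le_antisymm h4 h5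
          rw [if_neg (by simp only [Set.mem_Ioc]; push_neg; intro hx; linarith),
            if_neg (by simp only [Set.mem_Ioo]; push_neg; intro hx; linarith)]
          rw [hx5]; ring
      rcases le_or_gt x (q*h) with h3 | h3
      · have H1 : hatR h q x = (x - (q-1)*h) / h := by
          simp only [hatR]
          rw [if_pos (Set.mem_Ioc.2 ⟨by linarith, h3⟩)]
        rw [H1, H2 (by linarith),
          Set.indicator_of_notMem (by simp only [Set.mem_Ioc]; push_neg; intro hx; linarith),
          Set.indicator_of_mem (Set.mem_Ioc.2 ⟨h2, h3⟩),
          Set.indicator_of_notMem (by simp only [Set.mem_Ioc]; push_neg; intro hx; linarith)]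
        field_simp
        ring
      · rcases le_or_gt x (q*h + p) with h4 | h4
        · have H1 : hatR h q x = ((q+1)*h - x) / h := by
            simp only [hatR]
            rw [if_neg (by simp only [Set.mem_Ioc]; push_neg; intro hx; linarith),
              if_pos (Set.mem_Ioo.2 ⟨h3, by linarith⟩)]
          rw [H1, H2 h4,
            Set.indicator_of_notMem (by simp only [Set.mem_Ioc]; push_neg; intro hx; linarith),
            Set.indicator_of_notMem (by simp only [Set.mem_Ioc]; push_neg; intro hx; linarith),
            Set.indicator_of_mem (Set.mem_Ioc.2 ⟨h3, h4⟩)]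
          field_simp
          ring
        · have H2' : hatR h (q-1) (x - p) = 0 := by
            simp only [hatR]
            rw [if_neg (by simp only [Set.mem_Ioc]; push_neg; intro hx; linarith),
              if_neg (by simp only [Set.mem_Ioo]; push_neg; intro hx; linarith)]
          rw [H2', mul_zero,
            Set.indicator_of_notMem (by simp only [Set.mem_Ioc]; push_neg; intro hx; linarith),
            Set.indicator_of_notMem (by simp only [Set.mem_Ioc]; push_neg; intro hx; linarith),
            Set.indicator_of_notMem (by simp only [Set.mem_Ioc]; push_neg; intro hx; linarith)]
          ring

lemma indicator_int (h q p : ℝ) (hh : 0 < h) (hp0 : 0 ≤ p) (hph : p < h) :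
    (∫ x : ℝ, ((Set.Ioc ((q-1)*h) ((q-1)*h + p)).indicator
        (fun x => (1/h^2) * ((x - (q-1)*h) * (x - (p + (q-2)*h)))) x
      + (Set.Ioc ((q-1)*h + p) (q*h)).indicator
        (fun x => -(1/h^2) * ((x - (q-1)*h) * (x - (q*h + p)))) x
      + (Set.Ioc (q*h) (q*h + p)).indicator
        (fun x => (1/h^2) * ((x - (q+1)*h) * (x - (q*h + p)))) x))
    = (1 / h ^ 2) * ((1/6) * (h - p) ^ 3 - (1/3) * p ^ 3 + h ^ 2 * p) := by
  have hc1 : Continuous fun x : ℝ => (1/h^2) * ((x - (q-1)*h) * (x - (p + (q-2)*h))) := by continuity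
  have hc2 : Continuous fun x : ℝ => -(1/h^2) * ((x - (q-1)*h) * (x - (q*h + p))) := by continuity
  have hc3 : Continuous fun x : ℝ => (1/h^2) * ((x - (q+1)*h) * (x - (q*h + p))) := by continuity
  have hi1 : Integrable ((Set.Ioc ((q-1)*h) ((q-1)*h + p)).indicator
      (fun x => (1/h^2) * ((x - (q-1)*h) * (x - (p + (q-2)*h))))) :=
    (hc1.integrableOn_Ioc).integrable_indicator measurableSet_Ioc
  have hi2 : Integrable ((Set.Ioc ((q-1)*h + p) (q*h)).indicator
      (fun x => -(1/h^2) * ((x - (q-1)*h) * (x - (q*h + p))))) :=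
    (hc2.integrableOn_Ioc).integrable_indicator measurableSet_Ioc
  have hi3 : Integrable ((Set.Ioc (q*h) (q*h + p)).indicator
      (fun x => (1/h^2) * ((x - (q+1)*h) * (x - (q*h + p))))) :=
    (hc3.integrableOn_Ioc).integrable_indicator measurableSet_Ioc
  have hi12 : Integrable (fun x => (Set.Ioc ((q-1)*h) ((q-1)*h + p)).indicator
      (fun x => (1/h^2) * ((x - (q-1)*h) * (x - (p + (q-2)*h)))) x
      + (Set.Ioc ((q-1)*h + p) (q*h)).indicator
      (fun x => -(1/h^2) * ((x - (q-1)*h) * (x - (q*h + p)))) x) := hi1.add hi2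
  rw [integral_add hi12 hi3, integral_add hi1 hi2,
    MeasureTheory.integral_indicator measurableSet_Ioc,
    MeasureTheory.integral_indicator measurableSet_Ioc,
    MeasureTheory.integral_indicator measurableSet_Ioc,
    ← intervalIntegral.integral_of_le (by linarith),
    ← intervalIntegral.integral_of_le (by nlinarith),
    ← intervalIntegral.integral_of_le (by linarith)]
  rw [intervalIntegral.integral_const_mul, intervalIntegral.integral_const_mul,
    intervalIntegral.integral_const_mul, poly_int', poly_int', poly_int']
  field_simp
  ring

theorem hat_shift_inner_minus_one (h : ℝ) (hh : 0 < h) (k : ℤ) (p : ℝ) (hp : p ∈ Set.Ico 0 h) :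
    (∫ x : ℝ, hatFun h k x * hatFun h (k - 1) (x - p)) = (1 / h ^ 2) * ((1/6) * (h - p) ^ 3 - (1/3) * p ^ 3 + h ^ 2 * p) := by
  obtain ⟨hp0, hph⟩ := hp
  have hcast : ∀ x : ℝ, hatFun h k x * hatFun h (k - 1) (x - p) =
      hatR h (k : ℝ) x * hatR h ((k : ℝ) - 1) (x - p) := by
    intro x
    have e1 : hatFun h k x = hatR h (k : ℝ) x := rfl
    have e2 : hatFun h (k - 1) (x - p) = hatR h ((k : ℝ) - 1) (x - p) := by
      simp only [hatFun, hatR]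
      push_cast
      rfl
    rw [e1, e2]
  calc (∫ x : ℝ, hatFun h k x * hatFun h (k - 1) (x - p))
      = ∫ x : ℝ, ((Set.Ioc (((k:ℝ)-1)*h) (((k:ℝ)-1)*h + p)).indicator
          (fun x => (1/h^2) * ((x - ((k:ℝ)-1)*h) * (x - (p + ((k:ℝ)-2)*h)))) x
        + (Set.Ioc (((k:ℝ)-1)*h + p) ((k:ℝ)*h)).indicator
          (fun x => -(1/h^2) * ((x - ((k:ℝ)-1)*h) * (x - ((k:ℝ)*h + p)))) x
        + (Set.Ioc ((k:ℝ)*h) ((k:ℝ)*h + p)).indicator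
          (fun x => (1/h^2) * ((x - ((k:ℝ)+1)*h) * (x - ((k:ℝ)*h + p)))) x) := by
        congr 1
        funext x
        rw [hcast x, key_pt h (k:ℝ) p x hh hp0 hph]
    _ = (1 / h ^ 2) * ((1/6) * (h - p) ^ 3 - (1/3) * p ^ 3 + h ^ 2 * p) :=
        indicator_int h (k:ℝ) p hh hp0 hph
end

section
/- Let h > 0 and let ψ_k, ψ_{k-2} be P1 hat functions two grid cells apart on a grid of step h. Then for p ∈ [0,h): ∫ ψ_k(x)·ψ_{k-2}(x-p) dx = p³/(6h²). -/
open MeasureTheory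

lemma hat_aux (h : ℝ) (hh : 0 < h) (k : ℤ) (p : ℝ) (hp0 : 0 ≤ p) (hph : p < h)
    {x : ℝ} (hx : x ≠ ((k : ℝ) - 1) * h + p) :
    hatFun h k x * hatFun h (k - 2) (x - p) =
      Set.indicator (Set.Ioc (((k : ℝ) - 1) * h) (((k : ℝ) - 1) * h + p))
        (fun y => (y - ((k : ℝ) - 1) * h) * (((k : ℝ) - 1) * h + p - y) / h ^ 2) x := by
  have hne : h ≠ 0 := ne_of_gt hh
  have e1 : ((k : ℝ) - 2 - 1) * h = (k : ℝ) * h - 3 * h := by ring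
  have e2 : ((k : ℝ) - 2) * h = (k : ℝ) * h - 2 * h := by ring
  have e3 : ((k : ℝ) - 2 + 1) * h = (k : ℝ) * h - h := by ring
  have e4 : ((k : ℝ) - 1) * h = (k : ℝ) * h - h := by ring
  have e5 : ((k : ℝ) + 1) * h = (k : ℝ) * h + h := by ring
  rcases le_or_gt x (((k : ℝ) - 1) * h) with hxa | hxa
  · have L : hatFun h k x = 0 := by
      simp only [hatFun, Set.mem_Ioc, Set.mem_Ioo]
      push_cast
      rw [if_neg (by rintro ⟨h1, h2⟩; linarith), if_neg (by rintro ⟨h1, h2⟩; linarith)]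
    rw [L, zero_mul, Set.indicator_of_notMem (by
      intro hmem
      obtain ⟨h1, h2⟩ := Set.mem_Ioc.mp hmem
      linarith)]
  · rcases lt_or_ge x (((k : ℝ) - 1) * h + p) with hxb | hxb
    · have L : hatFun h k x = (x - ((k : ℝ) - 1) * h) / h := by
        simp only [hatFun, Set.mem_Ioc, Set.mem_Ioo]
        push_cast
        rw [if_pos ⟨hxa, by linarith⟩]
      have R : hatFun h (k - 2) (x - p) = (((k : ℝ) - 2 + 1) * h - (x - p)) / h := by
        simp only [hatFun, Set.mem_Ioc, Set.mem_Ioo]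
        push_cast
        rw [if_neg (by rintro ⟨h1, h2⟩; linarith), if_pos ⟨by linarith, by linarith⟩]
      rw [L, R, Set.indicator_of_mem (Set.mem_Ioc.mpr ⟨hxa, le_of_lt hxb⟩)]
      field_simp
      ring
    · have hxb' : ((k : ℝ) - 1) * h + p < x := lt_of_le_of_ne hxb (Ne.symm hx)
      have R : hatFun h (k - 2) (x - p) = 0 := by
        simp only [hatFun, Set.mem_Ioc, Set.mem_Ioo]
        push_cast
        rw [if_neg (by rintro ⟨h1, h2⟩; linarith), if_neg (by rintro ⟨h1, h2⟩; linarith)]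
      rw [R, mul_zero, Set.indicator_of_notMem (by
        intro hmem
        obtain ⟨h1, h2⟩ := Set.mem_Ioc.mp hmem
        linarith)]

theorem hat_shift_inner_minus_two (h : ℝ) (hh : 0 < h) (k : ℤ) (p : ℝ) (hp : p ∈ Set.Ico 0 h) :
    (∫ x : ℝ, hatFun h k x * hatFun h (k - 2) (x - p)) = p ^ 3 / (6 * h ^ 2) := by
  obtain ⟨hp0, hph⟩ := hp
  have hne : h ≠ 0 := ne_of_gt hh
  set a : ℝ := ((k : ℝ) - 1) * h with ha
  have heq : (fun x : ℝ => hatFun h k x * hatFun h (k - 2) (x - p)) =ᵐ[volume]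
      Set.indicator (Set.Ioc a (a + p)) (fun y => (y - a) * (a + p - y) / h ^ 2) := by
    have hnull : (volume : Measure ℝ) {a + p} = 0 := measure_singleton _
    refine Filter.eventuallyEq_of_mem (compl_mem_ae_iff.mpr hnull) ?_
    intro x hx
    exact hat_aux h hh k p hp0 hph (by simpa using hx)
  rw [integral_congr_ae heq, integral_indicator measurableSet_Ioc,
    ← intervalIntegral.integral_of_le (by linarith : a ≤ a + p)]
  have key : ∀ x ∈ Set.uIcc a (a + p),
      HasDerivAt (fun y : ℝ => (-(y ^ 3) / 3 + (2 * a + p) * y ^ 2 / 2 - a * (a + p) * y) / h ^ 2)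
        ((x - a) * (a + p - x) / h ^ 2) x := by
    intro x _
    have H : HasDerivAt (fun y : ℝ => -(y ^ 3) / 3 + (2 * a + p) * y ^ 2 / 2 - a * (a + p) * y)
        ((x - a) * (a + p - x)) x := by
      have := (((hasDerivAt_pow 3 x).neg.div_const 3).add
        (((hasDerivAt_pow 2 x).const_mul (2 * a + p)).div_const 2)).sub
        ((hasDerivAt_id x).const_mul (a * (a + p)))
      exact this.congr_deriv (by simp only [Nat.cast_ofNat, Nat.add_one_sub_one, mul_one]; ring)
    exact H.div_const _
  rw [intervalIntegral.integral_eq_sub_of_hasDerivAt key (by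
    apply Continuous.intervalIntegrable
    continuity)]
  field_simp
  ring
end

section
/- Let h > 0, ψ_k a P1 hat function and ψ_k' its (a.e. defined) derivative, equal to 1/h on ((k-1)h, kh) and −1/h on (kh,(k+1)h). Then for p ∈ [0,h): −∫ ψ_k(x)·ψ_k'(x−p) dx = −(1/h²)(2ph − (3/2)p²). -/
open MeasureTheory

lemma hat_int_helper (u v A c : ℝ) :
    ∫ x in u..v, (x - A) * c = ((v - A) ^ 2 / 2 - (u - A) ^ 2 / 2) * c := by
  rw [intervalIntegral.integral_mul_const,
    intervalIntegral.integral_comp_sub_right (fun x => x) A, integral_id]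
  ring

lemma hatFun_left {h : ℝ} {k : ℤ} {x : ℝ} (h1 : ((k : ℝ) - 1) * h < x) (h2 : x ≤ k * h) :
    hatFun h k x = (x - ((k : ℝ) - 1) * h) / h := by
  simp [hatFun, Set.mem_Ioc, h1, h2]

lemma hatFun_right {h : ℝ} {k : ℤ} {x : ℝ} (h1 : (k : ℝ) * h < x) (h2 : x < ((k : ℝ) + 1) * h) :
    hatFun h k x = (((k : ℝ) + 1) * h - x) / h := by
  have : ¬ x ≤ (k : ℝ) * h := not_le.2 h1
  simp [hatFun, Set.mem_Ioc, Set.mem_Ioo, h1, h2, this]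

lemma hatFun'_left {h : ℝ} {k : ℤ} {x : ℝ} (h1 : ((k : ℝ) - 1) * h < x) (h2 : x < k * h) :
    hatFun' h k x = 1 / h := by
  simp [hatFun', Set.mem_Ioo, h1, h2]

lemma hatFun'_right {h : ℝ} {k : ℤ} {x : ℝ} (h1 : (k : ℝ) * h < x) (h2 : x < ((k : ℝ) + 1) * h) :
    hatFun' h k x = -(1 / h) := by
  have : ¬ x < (k : ℝ) * h := not_lt.2 h1.le
  simp [hatFun', Set.mem_Ioo, h1, h2, this]

lemma hatFun'_zero_of_le {h : ℝ} {k : ℤ} {x : ℝ} (hh : 0 < h) (h1 : x ≤ ((k : ℝ) - 1) * h) :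
    hatFun' h k x = 0 := by
  have hab : ((k : ℝ) - 1) * h < k * h := by nlinarith
  have n1 : ¬ (((k : ℝ) - 1) * h < x) := not_lt.2 h1
  have n2 : ¬ ((k : ℝ) * h < x) := not_lt.2 (h1.trans hab.le)
  simp [hatFun', Set.mem_Ioo, n1, n2]

lemma hatFun_zero_of_not_mem {h : ℝ} {k : ℤ} {x : ℝ}
    (hx : x ∉ Set.Ioc (((k : ℝ) - 1) * h) (((k : ℝ) + 1) * h)) (hh : 0 < h) :
    hatFun h k x = 0 := by
  rw [Set.mem_Ioc, not_and_or, not_lt, not_le] at hx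
  rcases hx with hx | hx
  · have hab : ((k : ℝ) - 1) * h < k * h := by nlinarith
    have n1 : ¬ (x ∈ Set.Ioc (((k : ℝ) - 1) * h) ((k : ℝ) * h)) := by
      rw [Set.mem_Ioc]; push_neg; intro hc; linarith
    have n2 : ¬ (x ∈ Set.Ioo ((k : ℝ) * h) (((k : ℝ) + 1) * h)) := by
      rw [Set.mem_Ioo]; push_neg; intro hc; linarith
    simp [hatFun, n1, n2]
  · have hab : (k : ℝ) * h < ((k : ℝ) + 1) * h := by nlinarith
    have n1 : ¬ (x ∈ Set.Ioc (((k : ℝ) - 1) * h) ((k : ℝ) * h)) := by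
      rw [Set.mem_Ioc]; push_neg; intro hc; linarith
    have n2 : ¬ (x ∈ Set.Ioo ((k : ℝ) * h) (((k : ℝ) + 1) * h)) := by
      rw [Set.mem_Ioo]; push_neg; intro hc; linarith
    simp [hatFun, n1, n2]

theorem hat_shift_deriv_inner_same (h : ℝ) (hh : 0 < h) (k : ℤ) (p : ℝ) (hp : p ∈ Set.Ico 0 h) :
    (-∫ x : ℝ, hatFun h k x * hatFun' h k (x - p)) = -(1 / h ^ 2) * (2 * p * h - (3/2) * p ^ 2) := by
  obtain ⟨hp0, hph⟩ := hp
  have hne : h ≠ 0 := ne_of_gt hh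
  set a : ℝ := ((k : ℝ) - 1) * h with ha
  set b : ℝ := (k : ℝ) * h with hb
  set c : ℝ := ((k : ℝ) + 1) * h with hc
  set f : ℝ → ℝ := fun x => hatFun h k x * hatFun' h k (x - p) with hf
  -- support of f is inside Ioc a c
  have hsupp : Function.support f ⊆ Set.Ioc a c := by
    intro x hx
    by_contra hxc
    exact hx (by
      show hatFun h k x * hatFun' h k (x - p) = 0
      rw [hatFun_zero_of_not_mem hxc hh, zero_mul])
  have hglobal : (∫ x in a..c, f x) = ∫ x : ℝ, f x :=
    intervalIntegral.integral_eq_integral_of_support_subset hsupp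
  -- order of points
  have h1 : a ≤ a + p := by linarith
  have h2 : a + p ≤ b := by rw [ha, hb]; nlinarith
  have h3 : b ≤ b + p := by linarith
  have h4 : b + p ≤ c := by rw [hb, hc]; nlinarith
  -- a.e. helpers
  have haene : ∀ y : ℝ, ∀ᵐ x : ℝ, x ≠ y := by
    intro y
    rw [ae_iff]
    have : {x : ℝ | ¬ x ≠ y} = {y} := by ext x; simp
    rw [this]
    exact measure_singleton y
  -- piecewise descriptions
  have e1 : ∀ᵐ x : ℝ, x ∈ Set.uIoc a (a + p) → f x = (x - a) * 0 := by
    filter_upwards with x hx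
    rw [Set.uIoc_of_le h1, Set.mem_Ioc] at hx
    have hxa : x - p ≤ a := by linarith [hx.2]
    show hatFun h k x * hatFun' h k (x - p) = (x - a) * 0
    rw [hatFun'_zero_of_le hh hxa, mul_zero, mul_zero]
  have e2 : ∀ᵐ x : ℝ, x ∈ Set.uIoc (a + p) b → f x = (x - a) * (1 / h ^ 2) := by
    filter_upwards [haene b] with x hxb hx
    rw [Set.uIoc_of_le h2, Set.mem_Ioc] at hx
    have hxlt : x < b := lt_of_le_of_ne hx.2 hxb
    have hax : a < x := by linarith [hx.1]
    have hax' : a < x - p := by linarith [hx.1]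
    have hxb' : x - p < b := by linarith
    show hatFun h k x * hatFun' h k (x - p) = (x - a) * (1 / h ^ 2)
    rw [hatFun_left hax hx.2, hatFun'_left hax' hxb']
    rw [ha]
    ring
  have e3 : ∀ᵐ x : ℝ, x ∈ Set.uIoc b (b + p) → f x = (x - c) * (-(1 / h ^ 2)) := by
    filter_upwards [haene (b + p)] with x hxbp hx
    rw [Set.uIoc_of_le h3, Set.mem_Ioc] at hx
    have hxlt : x < b + p := lt_of_le_of_ne hx.2 hxbp
    have hxc : x < c := by linarith
    have hax' : a < x - p := by
      rw [ha]; rw [hb] at hx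
      nlinarith [hx.1]
    have hxb' : x - p < b := by linarith [hx.1]
    show hatFun h k x * hatFun' h k (x - p) = (x - c) * (-(1 / h ^ 2))
    rw [hatFun_right hx.1 hxc, hatFun'_left hax' hxb']
    rw [hc]
    ring
  have e4 : ∀ᵐ x : ℝ, x ∈ Set.uIoc (b + p) c → f x = (x - c) * (1 / h ^ 2) := by
    filter_upwards [haene c] with x hxc hx
    rw [Set.uIoc_of_le h4, Set.mem_Ioc] at hx
    have hxlt : x < c := lt_of_le_of_ne hx.2 hxc
    have hbx : b < x := by linarith [hx.1]
    have hbx' : b < x - p := by linarith [hx.1]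
    have hxc' : x - p < c := by linarith
    show hatFun h k x * hatFun' h k (x - p) = (x - c) * (1 / h ^ 2)
    rw [hatFun_right hbx hxlt, hatFun'_right hbx' hxc']
    rw [hc]
    ring
  -- integrability of f on each piece
  have intf : ∀ (u v A C : ℝ), (∀ᵐ x : ℝ, x ∈ Set.uIoc u v → f x = (x - A) * C) →
      IntervalIntegrable f volume u v := by
    intro u v A C he
    have contg : Continuous (fun x : ℝ => (x - A) * C) := by continuity
    refine (contg.intervalIntegrable u v).congr_ae ?_
    rw [Filter.EventuallyEq, ae_restrict_iff' measurableSet_uIoc]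
    filter_upwards [he] with x hx hmem
    exact (hx hmem).symm
  have i1 := intf a (a + p) a 0 e1
  have i2 := intf (a + p) b a (1 / h ^ 2) e2
  have i3 := intf b (b + p) c (-(1 / h ^ 2)) e3
  have i4 := intf (b + p) c c (1 / h ^ 2) e4
  -- split the integral
  have s12 : (∫ x in a..(a + p), f x) + (∫ x in (a + p)..b, f x) = ∫ x in a..b, f x :=
    intervalIntegral.integral_add_adjacent_intervals i1 i2
  have s34 : (∫ x in b..(b + p), f x) + (∫ x in (b + p)..c, f x) = ∫ x in b..c, f x :=
    intervalIntegral.integral_add_adjacent_intervals i3 i4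
  have s : (∫ x in a..b, f x) + (∫ x in b..c, f x) = ∫ x in a..c, f x :=
    intervalIntegral.integral_add_adjacent_intervals (i1.trans i2) (i3.trans i4)
  have v1 : (∫ x in a..(a + p), f x) = ((a + p - a) ^ 2 / 2 - (a - a) ^ 2 / 2) * 0 := by
    rw [intervalIntegral.integral_congr_ae e1, hat_int_helper]
  have v2 : (∫ x in (a + p)..b, f x) = ((b - a) ^ 2 / 2 - (a + p - a) ^ 2 / 2) * (1 / h ^ 2) := by
    rw [intervalIntegral.integral_congr_ae e2, hat_int_helper]
  have v3 : (∫ x in b..(b + p), f x) =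
      ((b + p - c) ^ 2 / 2 - (b - c) ^ 2 / 2) * (-(1 / h ^ 2)) := by
    rw [intervalIntegral.integral_congr_ae e3, hat_int_helper]
  have v4 : (∫ x in (b + p)..c, f x) = ((c - c) ^ 2 / 2 - (b + p - c) ^ 2 / 2) * (1 / h ^ 2) := by
    rw [intervalIntegral.integral_congr_ae e4, hat_int_helper]
  have hba : b - a = h := by rw [ha, hb]; ring
  have hbc : b - c = -h := by rw [hb, hc]; ring
  have hbpc : b + p - c = p - h := by rw [hb, hc]; ring
  rw [← hglobal, ← s, ← s12, ← s34, v1, v2, v3, v4, hba, hbc, hbpc]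
  field_simp
  ring
end

section
/- In the setting of the penalty method: let Z be a metric space, J, Λ: Z → ℝ continuous, Λ ≥ 0 with zero set A nonempty, and suppose J attains its minimum J* over A at x* ∈ A. Let λ_k → ∞ be a nondecreasing positive sequence and x_k a global minimizer of J + λ_k Λ over Z. If a subsequence x_{k_n} converges to x† ∈ Z, then Λ(x†) = 0 (so x† ∈ A) and J(x†) ≤ J*, hence x† minimizes J over A. -/
open Filter

theorem penalty_method_limit_points {Z : Type*} [MetricSpace Z]
    (J Lam : Z → ℝ) (hJ : Continuous J) (hLam : Continuous Lam)
    (hLamNonneg : ∀ x, 0 ≤ Lam x)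
    (lam : ℕ → ℝ) (hpos : ∀ k, 0 < lam k) (hmono : Monotone lam)
    (hto : Tendsto lam atTop atTop)
    (x : ℕ → Z)
    (hmin : ∀ k, ∀ y : Z, J (x k) + lam k * Lam (x k) ≤ J y + lam k * Lam y)
    (xstar : Z) (hxstar : Lam xstar = 0)
    (hopt : ∀ y, Lam y = 0 → J xstar ≤ J y)
    (κ : ℕ → ℕ) (hκ : StrictMono κ) (xdag : Z)
    (hconv : Tendsto (fun n => x (κ n)) atTop (nhds xdag)) :
    Lam xdag = 0 ∧ J xdag ≤ J xstar := by
  have hbound : ∀ k, J (x k) + lam k * Lam (x k) ≤ J xstar := by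
    intro k
    have := hmin k xstar
    simpa [hxstar] using this
  have hJle : ∀ k, J (x k) ≤ J xstar := by
    intro k
    have h0 : 0 ≤ lam k * Lam (x k) := mul_nonneg (hpos k).le (hLamNonneg _)
    linarith [hbound k]
  have hJconv : Tendsto (fun n => J (x (κ n))) atTop (nhds (J xdag)) :=
    (hJ.tendsto xdag).comp hconv
  have hJdag : J xdag ≤ J xstar :=
    le_of_tendsto hJconv (Eventually.of_forall fun n => hJle _)
  refine ⟨?_, hJdag⟩
  by_contra hne
  have hposL : 0 < Lam xdag := lt_of_le_of_ne (hLamNonneg _) (Ne.symm hne)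
  have hLconv : Tendsto (fun n => Lam (x (κ n))) atTop (nhds (Lam xdag)) :=
    (hLam.tendsto xdag).comp hconv
  have hlamκ : Tendsto (fun n => lam (κ n)) atTop atTop :=
    hto.comp hκ.tendsto_atTop
  have hprod : Tendsto (fun n => lam (κ n) * Lam (x (κ n))) atTop atTop :=
    hlamκ.atTop_mul_pos hposL hLconv
  have hub : ∀ n, lam (κ n) * Lam (x (κ n)) ≤ J xstar - J (x (κ n)) := by
    intro n; linarith [hbound (κ n)]
  have hrhs : Tendsto (fun n => J xstar - J (x (κ n))) atTop (nhds (J xstar - J xdag)) :=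
    tendsto_const_nhds.sub hJconv
  have h1 := hprod.eventually_ge_atTop (J xstar - J xdag + 1)
  have h2 := hrhs.eventually (gt_mem_nhds (lt_add_one (J xstar - J xdag)))
  obtain ⟨n, hn1, hn2⟩ := (h1.and h2).exists
  have := hub n
  linarith
end

section
/- On L²(0,2π) with the 2π-periodic shift operator T(p)φ = φ(·−p) (periodic extension), let z(t,x) = t^{−1/3}cos(x), φ(x) = sin(x), p ≡ 0, and α(t) = g(t) = t^{−1/3} on (0,T). The candidate directional derivative of J(α,p,φ) = ½‖z − α T(p)φ‖²_{L²(0,T;L²(0,2π))} in path direction g equals ‖cos‖²_{L²(0,2π)} ∫_0^T t^{−1/3} α(t) g(t) dt, and this integral diverges, even though α, g ∈ L²(0,T). -/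
open MeasureTheory Real

theorem path_directional_derivative_diverges (T : ℝ) (hT : 0 < T)
    (α g : ℝ → ℝ) (hα : α = fun t => t ^ (-(1/3 : ℝ))) (hg : g = α)
    (z : ℝ → ℝ → ℝ) (hz : z = fun t x => t ^ (-(1/3 : ℝ)) * Real.cos x) :
    MemLp α 2 (volume.restrict (Set.Ioo 0 T)) ∧
    MemLp g 2 (volume.restrict (Set.Ioo 0 T)) ∧
    (∀ t : ℝ, (∫ x in Set.Ioo 0 (2 * π), z t x * (α t * g t * Real.cos x))
      = (∫ x in Set.Ioo 0 (2 * π), Real.cos x ^ 2) * (t ^ (-(1/3 : ℝ)) * α t * g t)) ∧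
    (∫ x in Set.Ioo 0 (2 * π), Real.cos x ^ 2) = π ∧
    ¬ Integrable (fun t : ℝ => t ^ (-(1/3 : ℝ)) * α t * g t)
      (volume.restrict (Set.Ioo 0 T)) := by
  subst hg hα hz
  have hmeas : AEStronglyMeasurable (fun t : ℝ => t ^ (-(1/3 : ℝ)))
      (volume.restrict (Set.Ioo 0 T)) := by
    apply Measurable.aestronglyMeasurable; fun_prop
  have hmemα : MemLp (fun t : ℝ => t ^ (-(1/3 : ℝ))) 2 (volume.restrict (Set.Ioo 0 T)) := by
    rw [memLp_two_iff_integrable_sq hmeas]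
    have h23 : IntegrableOn (fun x : ℝ => x ^ (-(2/3) : ℝ)) (Set.Ioo 0 T) := by
      rw [intervalIntegral.integrableOn_Ioo_rpow_iff hT]; norm_num
    refine (integrable_congr ?_).mp h23
    filter_upwards [ae_restrict_mem measurableSet_Ioo] with t ht
    rw [← Real.rpow_natCast (t ^ (-(1/3:ℝ))) 2, ← Real.rpow_mul ht.1.le]
    norm_num
  refine ⟨hmemα, hmemα, ?_, ?_, ?_⟩
  · intro t
    rw [← MeasureTheory.integral_mul_const]
    congr 1; ext x; ring
  · have h1 : (∫ x in Set.Ioo 0 (2 * π), Real.cos x ^ 2)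
        = ∫ x in (0)..(2 * π), Real.cos x ^ 2 := by
      rw [intervalIntegral.integral_of_le (by positivity),
        MeasureTheory.integral_Ioc_eq_integral_Ioo]
    rw [h1, integral_cos_sq]
    simp [Real.sin_two_pi, Real.cos_two_pi]
  · intro hInt
    have : IntegrableOn (fun t : ℝ => t ^ (-1 : ℝ)) (Set.Ioo 0 T) := by
      refine (integrable_congr ?_).mp hInt
      filter_upwards [ae_restrict_mem measurableSet_Ioo] with t ht
      rw [← Real.rpow_add ht.1, ← Real.rpow_add ht.1]
      norm_num
    rw [intervalIntegral.integrableOn_Ioo_rpow_iff hT] at this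
    linarith
end
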